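/- (Even iterations theorem) Let V be a type and F a connected simple graph multifunction on V. Then F is not bipartite if and only if the multifunction v ↦ F^{2∪}(v) is connected. Moreover, F is bipartite if and only if for every n ≥ 1 the multifunction v ↦ F^{(2·n)∪}(v) is not connected. -/
import Mathlib


/-- The union image `S_F` of a multifunction. -/
def unionImage {V : Type*} (F : V → Set V) (A : Set V) : Set V := ⋃ a ∈ A, F a

/-- The `n`-th union iterate `F^{n∪}(v) = S_F^[n] {v}`. -/
def iterUnion {V : Type*} (F : V → Set V) (n : ℕ) (v : V) : Set V :=
  (unionImage F)^[n] {v}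

/-- A multifunction is connected if every two vertices are joined by some walk
of positive length. -/
def ConnectedMF {V : Type*} (G : V → Set V) : Prop :=
  ∀ u w : V, ∃ n ≥ 1, u ∈ iterUnion G n w

/-- The complete preimage `F_-(B) = {x | F(x) ∩ B ≠ ∅}`. -/
def preimMF {V : Type*} (F : V → Set V) (B : Set V) : Set V :=
  {x | (F x ∩ B).Nonempty}

/-- A set is independent for `F` if `U ∩ F_-(U) = ∅`. -/
def IndepMF {V : Type*} (F : V → Set V) (U : Set V) : Prop :=
  U ∩ preimMF F U = ∅

/-- `F` is bipartite if `V` splits into two nonempty disjoint independent sets. -/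
def BipartiteMF {V : Type*} (F : V → Set V) : Prop :=
  ∃ U W : Set V, U.Nonempty ∧ W.Nonempty ∧ IndepMF F U ∧ IndepMF F W ∧
    U ∪ W = Set.univ ∧ U ∩ W = ∅

/-- `F` is a simple graph multifunction: loopless and undirected. -/
def SimpleGraphMF {V : Type*} (F : V → Set V) : Prop :=
  (∀ v, v ∉ F v) ∧ (∀ u v, u ∈ F v ↔ v ∈ F u)

section Aux

variable {V : Type*} {F : V → Set V}

lemma mem_unionImage {A : Set V} {x : V} : x ∈ unionImage F A ↔ ∃ a ∈ A, x ∈ F a := by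
  simp [unionImage]

lemma unionImage_iUnion {ι : Sort*} (F : V → Set V) (B : ι → Set V) :
    unionImage F (⋃ i, B i) = ⋃ i, unionImage F (B i) := by
  ext x; simp only [unionImage, Set.mem_iUnion]; tauto

lemma iterate_unionImage (F : V → Set V) (n : ℕ) (A : Set V) :
    (unionImage F)^[n] A = ⋃ a ∈ A, (unionImage F)^[n] {a} := by
  induction n with
  | zero => simp
  | succ n ih =>
    rw [Function.iterate_succ_apply', ih, unionImage_iUnion]
    refine Set.iUnion_congr fun a => ?_
    rw [unionImage_iUnion]
    refine Set.iUnion_congr fun h => ?_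
    exact (Function.iterate_succ_apply' _ _ _).symm

lemma iter_succ' (F : V → Set V) (n : ℕ) (v : V) :
    iterUnion F (n+1) v = unionImage F (iterUnion F n v) := by
  simp [iterUnion, Function.iterate_succ_apply']

lemma iter_succ (F : V → Set V) (n : ℕ) (v : V) :
    iterUnion F (n+1) v = (unionImage F)^[n] (F v) := by
  rw [iterUnion, Function.iterate_succ_apply]
  congr 1
  ext x; simp [unionImage]

lemma mem_iter_first {n : ℕ} {v x : V} :
    x ∈ iterUnion F (n+1) v ↔ ∃ a ∈ F v, x ∈ iterUnion F n a := by
  rw [iter_succ, iterate_unionImage]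
  simp [iterUnion]

lemma mem_iter_last {n : ℕ} {v x : V} :
    x ∈ iterUnion F (n+1) v ↔ ∃ a ∈ iterUnion F n v, x ∈ F a := by
  rw [iter_succ', mem_unionImage]

lemma iter_concat {m n : ℕ} {v u x : V} (h1 : u ∈ iterUnion F m v)
    (h2 : x ∈ iterUnion F n u) : x ∈ iterUnion F (n + m) v := by
  have h : iterUnion F (n + m) v = (unionImage F)^[n] (iterUnion F m v) := by
    rw [iterUnion, Function.iterate_add_apply]; rfl
  rw [h, iterate_unionImage]
  exact Set.mem_biUnion h1 h2

lemma iter_symm (hsg : SimpleGraphMF F) :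
    ∀ n (u v : V), u ∈ iterUnion F n v → v ∈ iterUnion F n u := by
  intro n
  induction n with
  | zero =>
    intro u v h
    simp only [iterUnion, Function.iterate_zero, id_eq, Set.mem_singleton_iff] at h ⊢
    exact h.symm
  | succ n ih =>
    intro u v h
    rw [mem_iter_last] at h
    obtain ⟨a, ha, hua⟩ := h
    rw [mem_iter_first]
    exact ⟨a, (hsg.2 u a).mp hua, ih a v ha⟩

lemma F_nonempty (hconn : ConnectedMF F) (v : V) : (F v).Nonempty := by
  obtain ⟨n, hn, hv⟩ := hconn v v
  obtain ⟨m, rfl⟩ : ∃ m, n = m + 1 := ⟨n - 1, by omega⟩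
  rw [mem_iter_first] at hv
  obtain ⟨a, ha, _⟩ := hv
  exact ⟨a, ha⟩

lemma iter_add_two (hsg : SimpleGraphMF F) (hconn : ConnectedMF F)
    {n : ℕ} {u v : V} (h : u ∈ iterUnion F n v) : u ∈ iterUnion F (n + 2) v := by
  obtain ⟨w, hw⟩ := F_nonempty hconn u
  have h1 : u ∈ iterUnion F 1 w := by
    rw [mem_iter_first]
    exact ⟨u, (hsg.2 w u).mp hw, by simp [iterUnion]⟩
  have h2 : u ∈ iterUnion F 2 u := by
    rw [mem_iter_first]
    exact ⟨w, hw, h1⟩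
  have h3 := iter_concat h h2
  rwa [Nat.add_comm] at h3

lemma iterG (F : V → Set V) (k m : ℕ) (w : V) :
    iterUnion (fun v => iterUnion F k v) m w = iterUnion F (k * m) w := by
  induction m with
  | zero => simp [iterUnion]
  | succ m ih =>
    have hA : ∀ A : Set V, unionImage (fun v => iterUnion F k v) A = (unionImage F)^[k] A := by
      intro A
      rw [iterate_unionImage]
      rfl
    rw [iter_succ', ih, hA, iterUnion, ← Function.iterate_add_apply]
    show (unionImage F)^[k + k * m] {w} = iterUnion F (k * (m + 1)) w
    rw [iterUnion]
    congr 1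
    ring

lemma edge_cross {U W : Set V} (hU : IndepMF F U) (hUW : U ∪ W = Set.univ)
    {a b : V} (ha : a ∈ U) (hb : b ∈ F a) : b ∈ W := by
  have hbu : b ∈ U ∪ W := hUW ▸ Set.mem_univ b
  rcases hbu with h | h
  · exfalso
    have hmem : a ∈ U ∩ preimMF F U := ⟨ha, ⟨b, hb, h⟩⟩
    rw [hU] at hmem
    exact hmem
  · exact h

lemma bip_walk {U W : Set V} (hU : IndepMF F U) (hW : IndepMF F W)
    (hUW : U ∪ W = Set.univ) :
    ∀ n (v x : V), x ∈ iterUnion F n v →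
      (v ∈ U → (Even n → x ∈ U) ∧ (Odd n → x ∈ W)) ∧
      (v ∈ W → (Even n → x ∈ W) ∧ (Odd n → x ∈ U)) := by
  intro n
  induction n with
  | zero =>
    intro v x h
    simp only [iterUnion, Function.iterate_zero, id_eq, Set.mem_singleton_iff] at h
    subst h
    exact ⟨fun hv => ⟨fun _ => hv, fun ho => absurd ho (by simp)⟩,
           fun hv => ⟨fun _ => hv, fun ho => absurd ho (by simp)⟩⟩
  | succ n ih =>
    intro v x h
    rw [mem_iter_last] at h
    obtain ⟨a, ha, hxa⟩ := h
    have hWU : W ∪ U = Set.univ := by rw [Set.union_comm]; exact hUW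
    constructor
    · intro hv
      constructor
      · intro he
        have hn : Odd n := by
          rw [Nat.odd_iff]; rw [Nat.even_iff] at he; omega
        have haW : a ∈ W := ((ih v a ha).1 hv).2 hn
        exact edge_cross hW hWU haW hxa
      · intro ho
        have hn : Even n := by
          rw [Nat.even_iff]; rw [Nat.odd_iff] at ho; omega
        have haU : a ∈ U := ((ih v a ha).1 hv).1 hn
        exact edge_cross hU hUW haU hxa
    · intro hv
      constructor
      · intro he
        have hn : Odd n := by
          rw [Nat.odd_iff]; rw [Nat.even_iff] at he; omega
        have haU : a ∈ U := ((ih v a ha).2 hv).2 hn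
        exact edge_cross hU hUW haU hxa
      · intro ho
        have hn : Even n := by
          rw [Nat.even_iff]; rw [Nat.odd_iff] at ho; omega
        have haW : a ∈ W := ((ih v a ha).2 hv).1 hn
        exact edge_cross hW hWU haW hxa

end Aux

/-- Even iterations theorem: a connected simple graph multifunction is not
bipartite iff `F^{2∪}` is connected; it is bipartite iff every even iterate
`F^{(2·n)∪}` (`n ≥ 1`) is disconnected. -/
theorem stmt_12 {V : Type*} (F : V → Set V)
    (hsg : SimpleGraphMF F) (hconn : ConnectedMF F) :
    (¬ BipartiteMF F ↔ ConnectedMF (fun v => iterUnion F 2 v)) ∧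
    (BipartiteMF F ↔ ∀ n ≥ 1, ¬ ConnectedMF (fun v => iterUnion F (2 * n) v)) := by
  classical
  have key1 : BipartiteMF F → ∀ n ≥ 1, ¬ ConnectedMF (fun v => iterUnion F (2 * n) v) := by
    rintro ⟨U, W, ⟨u0, hu0⟩, ⟨w0, hw0⟩, hU, hW, hUW, hd⟩ n hn hG
    obtain ⟨m, hm, hmem⟩ := hG u0 w0
    rw [iterG] at hmem
    have heven : Even (2 * n * m) := ⟨n * m, by ring⟩
    have hu0W : u0 ∈ W := ((bip_walk hU hW hUW (2 * n * m) w0 u0 hmem).2 hw0).1 heven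
    have : u0 ∈ U ∩ W := ⟨hu0, hu0W⟩
    rw [hd] at this
    exact this
  have key2 : ¬ BipartiteMF F → ConnectedMF (fun v => iterUnion F 2 v) := by
    intro hnb
    by_cases hV : Nonempty V
    · obtain ⟨v0⟩ := hV
      by_cases hodd : ∃ u, (∃ n, Even n ∧ u ∈ iterUnion F n v0) ∧
          (∃ n, Odd n ∧ u ∈ iterUnion F n v0)
      · -- there is an odd closed walk at v0
        obtain ⟨u, ⟨a, hae, hua⟩, ⟨b, hbo, hub⟩⟩ := hodd
        have hva : v0 ∈ iterUnion F a u := iter_symm hsg a u v0 hua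
        have hclose : v0 ∈ iterUnion F (a + b) v0 := iter_concat hub hva
        have hLodd : Odd (a + b) := by
          obtain ⟨a', rfl⟩ := hae
          obtain ⟨b', rfl⟩ := hbo
          exact ⟨a' + b', by ring⟩
        intro x y
        obtain ⟨p, hp1, hpx⟩ := hconn x y
        rcases Nat.even_or_odd p with hpe | hpo
        · obtain ⟨m, hm⟩ := hpe
          refine ⟨m, by omega, ?_⟩
          rw [iterG]
          have h2m : 2 * m = p := by omega
          rwa [h2m]
        · -- build an odd closed walk at x, then attach
          obtain ⟨t, ht1, hxt⟩ := hconn x v0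
          have hv0x : v0 ∈ iterUnion F t x := iter_symm hsg t x v0 hxt
          have h1 : v0 ∈ iterUnion F ((a + b) + t) x := iter_concat hv0x hclose
          have h2 : x ∈ iterUnion F (t + ((a + b) + t)) x := iter_concat h1 hxt
          have h3 : x ∈ iterUnion F ((t + ((a + b) + t)) + p) y := iter_concat hpx h2
          obtain ⟨l, hl⟩ := hLodd
          obtain ⟨q, hq⟩ := hpo
          refine ⟨t + l + q + 1, by omega, ?_⟩
          rw [iterG]
          have heq : 2 * (t + l + q + 1) = (t + ((a + b) + t)) + p := by omega
          rwa [heq]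
      · -- no vertex reachable with both parities: F is bipartite, contradiction
        exfalso
        apply hnb
        refine ⟨{u | ∃ n, Even n ∧ u ∈ iterUnion F n v0},
                {u | ∃ n, Odd n ∧ u ∈ iterUnion F n v0}, ?_, ?_, ?_, ?_, ?_, ?_⟩
        · exact ⟨v0, 0, Even.zero, by simp [iterUnion]⟩
        · obtain ⟨w, hw⟩ := F_nonempty hconn v0
          refine ⟨w, 1, odd_one, ?_⟩
          rw [mem_iter_last]
          exact ⟨v0, by simp [iterUnion], hw⟩
        · ext x
          simp only [Set.mem_inter_iff, Set.mem_empty_iff_false, iff_false, not_and]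
          rintro ⟨n, hn, hx⟩ ⟨c, hc, ⟨m, hm, hcm⟩⟩
          have : c ∈ iterUnion F (n + 1) v0 := by
            rw [mem_iter_last]; exact ⟨x, hx, hc⟩
          exact hodd ⟨c, ⟨m, hm, hcm⟩, ⟨n + 1, hn.add_one, this⟩⟩
        · ext x
          simp only [Set.mem_inter_iff, Set.mem_empty_iff_false, iff_false, not_and]
          rintro ⟨n, hn, hx⟩ ⟨c, hc, ⟨m, hm, hcm⟩⟩
          have : c ∈ iterUnion F (n + 1) v0 := by
            rw [mem_iter_last]; exact ⟨x, hx, hc⟩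
          exact hodd ⟨c, ⟨n + 1, hn.add_one, this⟩, ⟨m, hm, hcm⟩⟩
        · ext u
          simp only [Set.mem_union, Set.mem_setOf_eq, Set.mem_univ, iff_true]
          obtain ⟨n, hn, hu⟩ := hconn u v0
          rcases Nat.even_or_odd n with h | h
          · exact Or.inl ⟨n, h, hu⟩
          · exact Or.inr ⟨n, h, hu⟩
        · ext u
          simp only [Set.mem_inter_iff, Set.mem_setOf_eq, Set.mem_empty_iff_false,
            iff_false, not_and]
          intro h1 h2
          exact hodd ⟨u, h1, h2⟩
    · intro x y
      exact absurd ⟨x⟩ hV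
  have h21 : ConnectedMF (fun v => iterUnion F (2 * 1) v) ↔
      ConnectedMF (fun v => iterUnion F 2 v) := by norm_num
  constructor
  · constructor
    · exact key2
    · intro hG hb
      exact key1 hb 1 le_rfl (h21.mpr hG)
  · constructor
    · exact key1
    · intro h
      by_contra hb
      exact h 1 le_rfl (h21.mpr (key2 hb))
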